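/- For vectors $\nu_1,\dots,\nu_n \in \mathbb{R}^d$ and symmetric positive semi-definite matrices $\Lambda_1,\dots,\Lambda_n \in \mathbb{R}^{d\times d}$, if $\nu_i \in \mathrm{Im}(\Lambda_i)$ for all $i$ and $\sum_{i=1}^n \nu_i^\top \Lambda_i^\dagger \nu_i \ne 0$, then $\inf\{\frac{1}{2}\sum_{i=1}^n \mu_i^\top \Lambda_i \mu_i : \mu \in \mathbb{R}^{n\times d}, \sum_{i=1}^n \mu_i^\top \nu_i = 2\varepsilon\} = \frac{2\varepsilon^2}{\sum_{i=1}^n \nu_i^\top \Lambda_i^\dagger \nu_i}$. -/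

import Mathlib

open Matrix BigOperators

/-- `B` is the Moore–Penrose pseudoinverse of `A`. -/
def IsMoorePenrose {d : ℕ} (A B : Matrix (Fin d) (Fin d) ℝ) : Prop :=
  A * B * A = A ∧ B * A * B = B ∧ (A * B).IsSymm ∧ (B * A).IsSymm

private lemma dp_helper {d : ℕ} (M N : Matrix (Fin d) (Fin d) ℝ) (x y : Fin d → ℝ) :
    (M *ᵥ x) ⬝ᵥ (N *ᵥ y) = x ⬝ᵥ ((Mᵀ * N) *ᵥ y) := by
  rw [← Matrix.mulVec_mulVec (N := N), Matrix.dotProduct_mulVec x Mᵀ,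
    Matrix.vecMul_transpose]

open scoped MatrixOrder in
private lemma sqrt_exists_helper {d : ℕ} (A : Matrix (Fin d) (Fin d) ℝ) (hA : A.PosSemidef) :
    ∃ X : Matrix (Fin d) (Fin d) ℝ, Xᵀ = X ∧ X * X = A := by
  obtain ⟨X, hX, -, hXX⟩ :=
    CFC.exists_sqrt_of_isSelfAdjoint_of_quasispectrumRestricts hA.isHermitian
      (QuasispectrumRestricts.nnreal_of_nonneg hA.nonneg)
  refine ⟨X, ?_, hXX⟩
  have h := hX.star_eq
  rw [Matrix.star_eq_conjTranspose, Matrix.conjTranspose_eq_transpose_of_trivial] at h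
  exact h

theorem stmt2 {n d : ℕ}
    (ν : Fin n → Fin d → ℝ)
    (Λ : Fin n → Matrix (Fin d) (Fin d) ℝ)
    (hsymm : ∀ i, (Λ i).IsSymm) (hpsd : ∀ i, (Λ i).PosSemidef)
    (pinv : Fin n → Matrix (Fin d) (Fin d) ℝ)
    (hpinv : ∀ i, IsMoorePenrose (Λ i) (pinv i))
    (hIm : ∀ i, ∃ x : Fin d → ℝ, (Λ i).mulVec x = ν i)
    (hne : (∑ i, ν i ⬝ᵥ (pinv i).mulVec (ν i)) ≠ 0)
    (ε : ℝ) (hε : 0 < ε) :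
    sInf {c : ℝ | ∃ μ : Fin n → Fin d → ℝ,
        (∑ i, μ i ⬝ᵥ ν i) = 2 * ε ∧
        c = (1 / 2) * ∑ i, μ i ⬝ᵥ (Λ i).mulVec (μ i)} =
      2 * ε ^ 2 / (∑ i, ν i ⬝ᵥ (pinv i).mulVec (ν i)) := by
  choose x hx using hIm
  set S := ∑ i, ν i ⬝ᵥ (pinv i).mulVec (ν i) with hSdef
  -- sqrt matrices
  set s : Fin n → Matrix (Fin d) (Fin d) ℝ := fun i => Classical.choose (sqrt_exists_helper _ (hpsd i)) with hsdef
  have hssymm : ∀ i, (s i)ᵀ = s i := fun i => by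
    exact (Classical.choose_spec (sqrt_exists_helper _ (hpsd i))).1
  have hsmul : ∀ i, s i * s i = Λ i := fun i => (Classical.choose_spec (sqrt_exists_helper _ (hpsd i))).2
  -- rewrite quadratic forms via sqrt
  have hquad : ∀ i (u v : Fin d → ℝ),
      u ⬝ᵥ (Λ i) *ᵥ v = (s i *ᵥ u) ⬝ᵥ (s i *ᵥ v) := by
    intro i u v
    rw [dp_helper, hssymm, hsmul]
  -- S = ∑ x i ⬝ᵥ Λ i *ᵥ x i
  have hSx : ∀ i, ν i ⬝ᵥ (pinv i) *ᵥ ν i = x i ⬝ᵥ (Λ i) *ᵥ x i := by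
    intro i
    rw [← hx i, Matrix.mulVec_mulVec, dp_helper, (hsymm i).eq, ← Matrix.mul_assoc,
      (hpinv i).1]
  have hS0 : S = ∑ i, x i ⬝ᵥ (Λ i) *ᵥ x i := by
    simp only [hSdef, hSx]
  have hSnonneg : 0 ≤ S := by
    rw [hS0]
    apply Finset.sum_nonneg
    intro i _
    have := (hpsd i).dotProduct_mulVec_nonneg (x i)
    simpa using this
  have hSpos : 0 < S := lt_of_le_of_ne hSnonneg (Ne.symm hne)
  -- lower bound via Cauchy–Schwarz
  have lower : ∀ c ∈ {c : ℝ | ∃ μ : Fin n → Fin d → ℝ,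
        (∑ i, μ i ⬝ᵥ ν i) = 2 * ε ∧
        c = (1 / 2) * ∑ i, μ i ⬝ᵥ (Λ i).mulVec (μ i)},
      2 * ε ^ 2 / S ≤ c := by
    rintro c ⟨μ, hcon, rfl⟩
    have key := Finset.sum_mul_sq_le_sq_mul_sq (Finset.univ : Finset (Fin n × Fin d))
      (fun p => (s p.1 *ᵥ μ p.1) p.2) (fun p => (s p.1 *ᵥ x p.1) p.2)
    have e1 : (∑ p : Fin n × Fin d, (s p.1 *ᵥ μ p.1) p.2 * (s p.1 *ᵥ x p.1) p.2)
        = 2 * ε := by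
      rw [Fintype.sum_prod_type, ← hcon]
      refine Finset.sum_congr rfl fun i _ => ?_
      rw [← hx i, hquad i (μ i) (x i)]
      rfl
    have e2 : (∑ p : Fin n × Fin d, (s p.1 *ᵥ μ p.1) p.2 ^ 2)
        = ∑ i, μ i ⬝ᵥ (Λ i) *ᵥ μ i := by
      rw [Fintype.sum_prod_type]
      refine Finset.sum_congr rfl fun i _ => ?_
      rw [hquad i (μ i) (μ i)]
      simp [dotProduct, sq]
    have e3 : (∑ p : Fin n × Fin d, (s p.1 *ᵥ x p.1) p.2 ^ 2) = S := by
      rw [Fintype.sum_prod_type, hS0]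
      refine Finset.sum_congr rfl fun i _ => ?_
      rw [hquad i (x i) (x i)]
      simp [dotProduct, sq]
    rw [e1, e2, e3] at key
    rw [div_le_iff₀ hSpos]
    nlinarith [key]
  -- the optimum point
  set μ₀ : Fin n → Fin d → ℝ := fun i => (2 * ε / S) • ((pinv i) *ᵥ ν i) with hμ₀
  have hΛBν : ∀ i, (Λ i) *ᵥ ((pinv i) *ᵥ ν i) = ν i := by
    intro i
    rw [Matrix.mulVec_mulVec, ← hx i, Matrix.mulVec_mulVec, (hpinv i).1, hx i]
  have hcon : (∑ i, μ₀ i ⬝ᵥ ν i) = 2 * ε := by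
    have : ∀ i, μ₀ i ⬝ᵥ ν i = (2 * ε / S) * (ν i ⬝ᵥ (pinv i) *ᵥ ν i) := by
      intro i
      rw [hμ₀]
      simp only [smul_dotProduct, smul_eq_mul]
      rw [dotProduct_comm]
    simp only [this, ← Finset.mul_sum, ← hSdef]
    field_simp
  have hval : (1 / 2) * ∑ i, μ₀ i ⬝ᵥ (Λ i) *ᵥ (μ₀ i) = 2 * ε ^ 2 / S := by
    have : ∀ i, μ₀ i ⬝ᵥ (Λ i) *ᵥ (μ₀ i)
        = (2 * ε / S)^2 * (ν i ⬝ᵥ (pinv i) *ᵥ ν i) := by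
      intro i
      rw [hμ₀]
      simp only [Matrix.mulVec_smul, smul_dotProduct, dotProduct_smul,
        smul_eq_mul]
      rw [hΛBν i, dotProduct_comm]
      ring
    simp only [this, ← Finset.mul_sum, ← hSdef]
    field_simp
  have hmem : (2 * ε ^ 2 / S) ∈ {c : ℝ | ∃ μ : Fin n → Fin d → ℝ,
        (∑ i, μ i ⬝ᵥ ν i) = 2 * ε ∧
        c = (1 / 2) * ∑ i, μ i ⬝ᵥ (Λ i).mulVec (μ i)} :=
    ⟨μ₀, hcon, hval.symm⟩
  exact le_antisymm (csInf_le ⟨2 * ε ^ 2 / S, lower⟩ hmem)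
    (le_csInf ⟨_, hmem⟩ lower)
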